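/- Let $u$ be a locally finite positive Borel measure, $\mathcal{D}$ a dyadic system of cubes, and $\{a_Q : Q \in \mathcal{D}\}$ nonnegative constants. If there is a constant $C$ with $\sum_{Q \in \mathcal{D}: Q \subset S} a_Q \le C\, u(S)$ for every $S \in \mathcal{D}$, then for every $f \in L^2(u)$, $\sum_{Q \in \mathcal{D}} a_Q |\mathbf{E}_Q^u f|^2 \le 4C \|f\|_{L^2(u)}^2$, where $\mathbf{E}_Q^u f := \frac{1}{u(Q)} \int_Q f\, du$ is the $u$-average of $f$ over $Q$. -/

import Mathlib

/-!
Fix a finite family `F` of cubes and let `M f x = max {|⨍_Q f| : Q ∈ F, x ∈ Q}`. For every level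
`t > 0` the cubes `Q ∈ F` with `|⨍_Q f| > t` cover exactly `{M f > t}`, and the maximal ones among
them are pairwise disjoint. Summing the Carleson condition over those maximal cubes gives
`∑_{|⨍_Q f| > t} a_Q ≤ C u{M f > t}`, and summing `t u(Q) ≤ ∫_Q |f|` over them gives the weak-type
bound `t u{M f > t} ≤ ∫_{M f > t} |f|`.

Writing the left-hand side as `∫ |⨍_Q f|² dν(Q)` with `ν = ∑_{Q ∈ F} a_Q δ_Q`, the layer-cake
formula turns the first bound into `∑_{Q ∈ F} a_Q |⨍_Q f|² ≤ C ‖M f‖₂²`. The layer-cake formula,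
Fubini and Cauchy–Schwarz turn the second into `‖M f‖₂² ≤ 2 ∫ |f| M f ≤ 2 ‖f‖₂ ‖M f‖₂`, that is,
Doob's inequality `‖M f‖₂ ≤ 2 ‖f‖₂`. Finally let `F` exhaust the index set.
-/

open MeasureTheory Set
open scoped ENNReal NNReal

theorem ENNReal.le_sq_mul_of_le_mul_rpow_half {a b c : ℝ≥0∞} (ha : a ≠ ∞)
    (h : a ≤ c * (b ^ (1 / 2 : ℝ) * a ^ (1 / 2 : ℝ))) : a ≤ c ^ 2 * b := by
  rcases eq_or_ne a 0 with rfl | ha0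
  · exact zero_le
  have hsq : ∀ x : ℝ≥0∞, (x ^ (1 / 2 : ℝ)) ^ 2 = x := fun x => by
    rw [← ENNReal.rpow_natCast, ← ENNReal.rpow_mul]; norm_num
  have hs0 : a ^ (1 / 2 : ℝ) ≠ 0 := by simp [ha0]
  have hstop : a ^ (1 / 2 : ℝ) ≠ ∞ := by simp [ha]
  have hle : a ^ (1 / 2 : ℝ) ≤ c * b ^ (1 / 2 : ℝ) := by
    refine (ENNReal.mul_le_mul_iff_left hs0 hstop).1 ?_
    rw [← sq, hsq, mul_assoc]
    exact h
  calc a = (a ^ (1 / 2 : ℝ)) ^ 2 := (hsq a).symm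
    _ ≤ (c * b ^ (1 / 2 : ℝ)) ^ 2 := by gcongr
    _ = c ^ 2 * b := by rw [mul_pow, hsq]

section LayerCake

variable {α β : Type*} [MeasurableSpace α] [MeasurableSpace β] {μ : Measure α} {ν : Measure β}

theorem lintegral_ofReal_sq_eq {φ : α → ℝ} (hφ0 : 0 ≤ᵐ[μ] φ) (hφ : AEMeasurable φ μ) :
    ∫⁻ x, ENNReal.ofReal (φ x ^ 2) ∂μ = 2 * ∫⁻ t in Ioi 0, μ {x | t < φ x} * ENNReal.ofReal t := by
  have h := lintegral_rpow_eq_lintegral_meas_lt_mul μ hφ0 hφ two_pos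
  norm_num [Real.rpow_two] at h
  exact h

theorem lintegral_ofReal_sq_le_of_meas_lt_le {φ : α → ℝ} {ψ : β → ℝ} (hφ0 : 0 ≤ᵐ[μ] φ)
    (hφ : AEMeasurable φ μ) (hψ0 : 0 ≤ᵐ[ν] ψ) (hψ : AEMeasurable ψ ν) {C : ℝ≥0∞}
    (h : ∀ t > 0, μ {x | t < φ x} ≤ C * ν {y | t < ψ y}) :
    ∫⁻ x, ENNReal.ofReal (φ x ^ 2) ∂μ ≤ C * ∫⁻ y, ENNReal.ofReal (ψ y ^ 2) ∂ν := by
  have hanti : Antitone fun t : ℝ => ν {y | t < ψ y} :=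
    fun s t hst => measure_mono fun y hy => hst.trans_lt hy
  have hmeas : Measurable fun t : ℝ => ν {y | t < ψ y} * ENNReal.ofReal t :=
    hanti.measurable.mul ENNReal.measurable_ofReal
  rw [lintegral_ofReal_sq_eq hφ0 hφ, lintegral_ofReal_sq_eq hψ0 hψ, mul_left_comm,
    ← lintegral_const_mul _ hmeas]
  gcongr 2 * ?_
  refine setLIntegral_mono' measurableSet_Ioi fun t ht => ?_
  rw [← mul_assoc]
  gcongr
  exact h t ht

theorem lintegral_ofReal_sq_le_four_mul {ψ : α → ℝ} {G : α → ℝ≥0∞} (hψ0 : 0 ≤ ψ)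
    (hψ : Measurable ψ) (hG : AEMeasurable G μ)
    (hweak : ∀ t > 0, ENNReal.ofReal t * μ {x | t < ψ x} ≤ ∫⁻ x in {x | t < ψ x}, G x ∂μ)
    (hfin : ∫⁻ x, ENNReal.ofReal (ψ x ^ 2) ∂μ ≠ ∞) :
    ∫⁻ x, ENNReal.ofReal (ψ x ^ 2) ∂μ ≤ 4 * ∫⁻ x, G x ^ 2 ∂μ := by
  have hlin : ∫⁻ x, ENNReal.ofReal (ψ x ^ 2) ∂μ ≤ 2 * ∫⁻ x, G x * ENNReal.ofReal (ψ x) ∂μ :=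
    calc ∫⁻ x, ENNReal.ofReal (ψ x ^ 2) ∂μ
        = 2 * ∫⁻ t in Ioi 0, μ {x | t < ψ x} * ENNReal.ofReal t :=
          lintegral_ofReal_sq_eq (.of_forall hψ0) hψ.aemeasurable
      _ ≤ 2 * ∫⁻ t in Ioi 0, μ.withDensity G {x | t < ψ x} := by
          gcongr 2 * ?_
          refine setLIntegral_mono' measurableSet_Ioi fun t ht => ?_
          rw [withDensity_apply _ (measurableSet_lt measurable_const hψ), mul_comm]
          exact hweak t ht
      _ = 2 * ∫⁻ x, G x * ENNReal.ofReal (ψ x) ∂μ := by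
          rw [← lintegral_eq_lintegral_meas_lt _ (.of_forall hψ0) hψ.aemeasurable,
            lintegral_withDensity_eq_lintegral_mul₀ hG hψ.ennreal_ofReal.aemeasurable]
          rfl
  have hCS : ∫⁻ x, G x * ENNReal.ofReal (ψ x) ∂μ
      ≤ (∫⁻ x, G x ^ 2 ∂μ) ^ (1 / 2 : ℝ) * (∫⁻ x, ENNReal.ofReal (ψ x ^ 2) ∂μ) ^ (1 / 2 : ℝ) := by
    have h := ENNReal.lintegral_mul_le_Lp_mul_Lq μ .two_two hG hψ.ennreal_ofReal.aemeasurable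
    simpa only [ENNReal.rpow_two, Pi.mul_apply, ← ENNReal.ofReal_pow (hψ0 _)] using h
  have h4 : (4 : ℝ≥0∞) = 2 ^ 2 := by norm_num
  rw [h4]
  exact ENNReal.le_sq_mul_of_le_mul_rpow_half hfin (hlin.trans (by gcongr))

end LayerCake

theorem enorm_setAverage_mul_measure_le {α E : Type*} [MeasurableSpace α] {μ : Measure α}
    [NormedAddCommGroup E] [NormedSpace ℝ E] (f : α → E) (s : Set α) :
    ‖⨍ x in s, f x ∂μ‖ₑ * μ s ≤ ∫⁻ x in s, ‖f x‖ₑ ∂μ := by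
  rcases eq_or_ne (μ s) ∞ with hs | hs
  · simp [setAverage_eq, Measure.real, hs]
  calc ‖⨍ x in s, f x ∂μ‖ₑ * μ s = ‖μ.real s • ⨍ x in s, f x ∂μ‖ₑ := by
        rw [enorm_smul, Real.enorm_of_nonneg measureReal_nonneg, Measure.real,
          ENNReal.ofReal_toReal hs, mul_comm]
    _ = ‖∫ x in s, f x ∂μ‖ₑ := by rw [measure_smul_setAverage f hs]
    _ ≤ ∫⁻ x in s, ‖f x‖ₑ ∂μ := enorm_integral_le_lintegral_enorm f

theorem eLpNorm_two_sq {α E : Type*} [MeasurableSpace α] {μ : Measure α} [NormedAddCommGroup E]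
    (f : α → E) : eLpNorm f 2 μ ^ 2 = ∫⁻ x, ‖f x‖ₑ ^ 2 ∂μ := by
  simpa [ENNReal.rpow_two] using eLpNorm_nnreal_pow_eq_lintegral (f := f) (μ := μ) two_ne_zero

section Cubes

variable {X ι : Type*} {cube : ι → Set X}

theorem exists_pairwiseDisjoint_subset_cover
    (hnested : ∀ i j, cube i ⊆ cube j ∨ cube j ⊆ cube i ∨ Disjoint (cube i) (cube j))
    (F : Finset ι) :
    ∃ M ⊆ F, (M : Set ι).PairwiseDisjoint cube ∧ ∀ Q ∈ F, ∃ S ∈ M, cube Q ⊆ cube S := by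
  classical
  induction F using Finset.induction_on with
  | empty => exact ⟨∅, subset_rfl, by simp, by simp⟩
  | insert Q F _ ih =>
    obtain ⟨M, hMF, hdisj, hcov⟩ := ih
    by_cases hQ : ∃ S ∈ M, cube Q ⊆ cube S
    · exact ⟨M, hMF.trans (Finset.subset_insert _ _), hdisj,
        Finset.forall_mem_insert _ _ _ |>.2 ⟨hQ, hcov⟩⟩
    push Not at hQ
    -- `Q` lies in no member of `M`, so each member of `M` is inside `Q` or disjoint from it.
    refine ⟨insert Q (M.filter fun S => ¬cube S ⊆ cube Q),
      Finset.insert_subset_insert _ ((Finset.filter_subset _ _).trans hMF), ?_, ?_⟩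
    · rw [Finset.coe_insert, Finset.coe_filter]
      refine (hdisj.subset fun S hS => hS.1).insert fun S hS _ => ?_
      rcases hnested Q S with h | h | h
      · exact absurd h (hQ S hS.1)
      · exact absurd h hS.2
      · exact h
    · refine Finset.forall_mem_insert _ _ _ |>.2 ⟨⟨Q, Finset.mem_insert_self _ _, subset_rfl⟩, ?_⟩
      intro R hR
      obtain ⟨S, hS, hRS⟩ := hcov R hR
      by_cases hSQ : cube S ⊆ cube Q
      · exact ⟨Q, Finset.mem_insert_self _ _, hRS.trans hSQ⟩
      · exact ⟨S, Finset.mem_insert_of_mem (Finset.mem_filter.2 ⟨hS, hSQ⟩), hRS⟩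

theorem biUnion_eq_of_forall_subset {M F : Finset ι} (hMF : M ⊆ F)
    (hcov : ∀ Q ∈ F, ∃ S ∈ M, cube Q ⊆ cube S) : ⋃ Q ∈ F, cube Q = ⋃ S ∈ M, cube S :=
  Subset.antisymm
    (iUnion₂_subset fun Q hQ => by
      obtain ⟨S, hS, hQS⟩ := hcov Q hQ
      exact hQS.trans (subset_biUnion_of_mem hS))
    (biUnion_mono hMF fun _ _ => subset_rfl)

variable [MeasurableSpace X] {u : Measure X}

theorem sum_le_mul_measure_biUnion (hmeas : ∀ i, MeasurableSet (cube i))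
    (hnested : ∀ i j, cube i ⊆ cube j ∨ cube j ⊆ cube i ∨ Disjoint (cube i) (cube j))
    {a : ι → ℝ≥0∞} {C : ℝ≥0∞}
    (hCar : ∀ S : ι, ∑' Q : {Q : ι // cube Q ⊆ cube S}, a (Q : ι) ≤ C * u (cube S))
    (G : Finset ι) : ∑ Q ∈ G, a Q ≤ C * u (⋃ Q ∈ G, cube Q) := by
  classical
  obtain ⟨M, hMG, hdisj, hcov⟩ := exists_pairwiseDisjoint_subset_cover hnested G
  have hpack : ∀ S, ∑ Q ∈ G with cube Q ⊆ cube S, a Q ≤ C * u (cube S) := fun S =>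
    calc ∑ Q ∈ G with cube Q ⊆ cube S, a Q
        = ∑ Q ∈ G, {Q | cube Q ⊆ cube S}.indicator a Q := by
          rw [Finset.sum_filter]; rfl
      _ ≤ ∑' Q, {Q | cube Q ⊆ cube S}.indicator a Q := ENNReal.sum_le_tsum _
      _ = ∑' Q : {Q : ι // cube Q ⊆ cube S}, a Q := (tsum_subtype _ _).symm
      _ ≤ C * u (cube S) := hCar S
  calc ∑ Q ∈ G, a Q ≤ ∑ Q ∈ G, ∑ S ∈ M with cube Q ⊆ cube S, a Q :=
        Finset.sum_le_sum fun Q hQ => by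
          obtain ⟨S, hS, hQS⟩ := hcov Q hQ
          exact Finset.single_le_sum (f := fun _ => a Q) (fun _ _ => zero_le)
            (Finset.mem_filter.2 ⟨hS, hQS⟩)
    _ = ∑ S ∈ M, ∑ Q ∈ G with cube Q ⊆ cube S, a Q := by
        simp only [Finset.sum_filter]
        exact Finset.sum_comm
    _ ≤ ∑ S ∈ M, C * u (cube S) := Finset.sum_le_sum fun S _ => hpack S
    _ = C * u (⋃ Q ∈ G, cube Q) := by
        rw [biUnion_eq_of_forall_subset hMG hcov, measure_biUnion_finset hdisj fun S _ => hmeas S,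
          Finset.mul_sum]

theorem mul_measure_biUnion_le_setLIntegral (hmeas : ∀ i, MeasurableSet (cube i))
    (hnested : ∀ i j, cube i ⊆ cube j ∨ cube j ⊆ cube i ∨ Disjoint (cube i) (cube j))
    {c : ℝ≥0∞} {φ : X → ℝ≥0∞} {G : Finset ι}
    (h : ∀ Q ∈ G, c * u (cube Q) ≤ ∫⁻ x in cube Q, φ x ∂u) :
    c * u (⋃ Q ∈ G, cube Q) ≤ ∫⁻ x in ⋃ Q ∈ G, cube Q, φ x ∂u := by
  obtain ⟨M, hMG, hdisj, hcov⟩ := exists_pairwiseDisjoint_subset_cover hnested G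
  rw [biUnion_eq_of_forall_subset hMG hcov, measure_biUnion_finset hdisj fun S _ => hmeas S,
    lintegral_biUnion_finset hdisj (fun S _ => hmeas S), Finset.mul_sum]
  exact Finset.sum_le_sum fun S hS => h S (hMG hS)

end Cubes

section MaximalFunction

variable {X ι : Type*}

noncomputable def maximalFunction (s : ι → Set X) (F : Finset ι) (c : ι → ℝ≥0) : X → ℝ≥0 :=
  F.sup fun i => (s i).indicator fun _ => c i

variable {s : ι → Set X} {F : Finset ι} {c : ι → ℝ≥0}

theorem setOf_lt_maximalFunction {t : ℝ} (ht : 0 ≤ t) :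
    {x | t < (maximalFunction s F c x : ℝ)} = ⋃ i ∈ F.filter (fun i => t < c i), s i := by
  ext x
  lift t to ℝ≥0 using ht
  simp only [maximalFunction, Finset.sup_apply, NNReal.coe_lt_coe, mem_ofPred_eq,
    Finset.lt_sup_iff, mem_iUnion, Finset.mem_filter, exists_prop]
  constructor
  · rintro ⟨i, hi, hlt⟩
    by_cases hx : x ∈ s i
    · rw [indicator_of_mem hx] at hlt
      exact ⟨i, ⟨hi, hlt⟩, hx⟩
    · simp [indicator_of_notMem hx] at hlt
  · rintro ⟨i, ⟨hi, hlt⟩, hx⟩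
    exact ⟨i, hi, by rwa [indicator_of_mem hx]⟩

theorem maximalFunction_le_sup (x : X) : maximalFunction s F c x ≤ F.sup c := by
  simp only [maximalFunction, Finset.sup_apply]
  exact Finset.sup_mono_fun fun i _ => indicator_le_self' (fun _ _ => zero_le) x

variable [MeasurableSpace X]

theorem measurable_maximalFunction (hs : ∀ i, MeasurableSet (s i)) :
    Measurable (maximalFunction s F c) :=
  Finset.sup_induction measurable_const (fun _ hf _ hg => hf.sup hg)
    fun i _ => measurable_const.indicator (hs i)

theorem lintegral_maximalFunction_sq_ne_top {μ : Measure X} (hs : ∀ i, MeasurableSet (s i))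
    (hfin : ∀ i ∈ F, 0 < c i → μ (s i) ≠ ∞) :
    ∫⁻ x, ENNReal.ofReal ((maximalFunction s F c x : ℝ) ^ 2) ∂μ ≠ ∞ := by
  set U := {x | (0 : ℝ) < maximalFunction s F c x} with hU_eq
  have hle : ∀ x, ENNReal.ofReal ((maximalFunction s F c x : ℝ) ^ 2)
      ≤ U.indicator (fun _ => ENNReal.ofReal (((F.sup c : ℝ≥0) : ℝ) ^ 2)) x := by
    intro x
    by_cases hx : x ∈ U
    · rw [indicator_of_mem hx]
      gcongr
      exact_mod_cast maximalFunction_le_sup x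
    · simp_all [U]
  have hU : μ U ≠ ∞ := by
    rw [hU_eq, setOf_lt_maximalFunction le_rfl]
    refine ((measure_biUnion_finset_le _ _).trans_lt (ENNReal.sum_lt_top.2 fun i hi => ?_)).ne
    obtain ⟨hiF, hci⟩ := Finset.mem_filter.1 hi
    exact (hfin i hiF (mod_cast hci)).lt_top
  refine ne_top_of_le_ne_top ?_ (lintegral_mono hle)
  rw [lintegral_indicator_const
    (measurableSet_lt measurable_const (measurable_maximalFunction hs).coe_nnreal_real)]
  exact ENNReal.mul_ne_top ENNReal.ofReal_ne_top hU

end MaximalFunction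

section Carleson

variable {X ι : Type*} [MeasurableSpace X] {u : Measure X} {cube : ι → Set X}

theorem sum_mul_sq_setAverage_le (hmeas : ∀ i, MeasurableSet (cube i))
    (hnested : ∀ i j, cube i ⊆ cube j ∨ cube j ⊆ cube i ∨ Disjoint (cube i) (cube j))
    {a : ι → ℝ≥0∞} {C : ℝ≥0∞}
    (hCar : ∀ S : ι, ∑' Q : {Q : ι // cube Q ⊆ cube S}, a (Q : ι) ≤ C * u (cube S))
    {f : X → ℝ} (hf : AEStronglyMeasurable f u) (F : Finset ι) :
    ∑ Q ∈ F, a Q * ENNReal.ofReal ((⨍ x in cube Q, f x ∂u) ^ 2)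
      ≤ 4 * C * ∫⁻ x, ‖f x‖ₑ ^ 2 ∂u := by
  set e : ι → ℝ≥0 := fun Q => ‖⨍ x in cube Q, f x ∂u‖₊
  set ψ : X → ℝ := fun x => maximalFunction cube F e x
  have hψ : Measurable ψ := (measurable_maximalFunction hmeas).coe_nnreal_real
  let _ : MeasurableSpace ι := ⊤
  set ν : Measure ι := ∑ Q ∈ F, a Q • Measure.dirac Q
  have hsum : ∑ Q ∈ F, a Q * ENNReal.ofReal ((⨍ x in cube Q, f x ∂u) ^ 2)
      = ∫⁻ Q, ENNReal.ofReal ((e Q : ℝ) ^ 2) ∂ν := by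
    simp [ν, e]
  have hdist : ∀ t : ℝ, 0 < t → ν {Q | t < e Q} ≤ C * u {x | t < ψ x} := by
    intro t ht
    have hν : ν {Q | t < e Q} = ∑ Q ∈ F with t < e Q, a Q := by
      simp [ν, Finset.sum_filter, Set.indicator_apply]
    rw [setOf_lt_maximalFunction ht.le, hν]
    exact sum_le_mul_measure_biUnion hmeas hnested hCar _
  have hweak : ∀ t : ℝ, 0 < t →
      ENNReal.ofReal t * u {x | t < ψ x} ≤ ∫⁻ x in {x | t < ψ x}, ‖f x‖ₑ ∂u := by
    intro t ht
    rw [setOf_lt_maximalFunction ht.le]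
    refine mul_measure_biUnion_le_setLIntegral hmeas hnested fun Q hQ => ?_
    have hte : ENNReal.ofReal t ≤ ‖⨍ x in cube Q, f x ∂u‖ₑ := by
      rw [← ofReal_norm]
      exact ENNReal.ofReal_le_ofReal (Finset.mem_filter.1 hQ).2.le
    exact (mul_le_mul_left hte _).trans (enorm_setAverage_mul_measure_le f _)
  have hfin : ∫⁻ x, ENNReal.ofReal (ψ x ^ 2) ∂u ≠ ∞ := by
    refine lintegral_maximalFunction_sq_ne_top hmeas fun Q _ hQ hinf => ?_
    simp [e, setAverage_eq, Measure.real, hinf] at hQ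
  calc ∑ Q ∈ F, a Q * ENNReal.ofReal ((⨍ x in cube Q, f x ∂u) ^ 2)
      = ∫⁻ Q, ENNReal.ofReal ((e Q : ℝ) ^ 2) ∂ν := hsum
    _ ≤ C * ∫⁻ x, ENNReal.ofReal (ψ x ^ 2) ∂u :=
        lintegral_ofReal_sq_le_of_meas_lt_le (.of_forall fun Q => (e Q).2)
          Measurable.of_discrete.aemeasurable (.of_forall fun x => (maximalFunction cube F e x).2)
          hψ.aemeasurable hdist
    _ ≤ C * (4 * ∫⁻ x, ‖f x‖ₑ ^ 2 ∂u) := by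
        gcongr
        exact lintegral_ofReal_sq_le_four_mul (fun x => (maximalFunction cube F e x).2) hψ
          hf.enorm hweak hfin
    _ = 4 * C * ∫⁻ x, ‖f x‖ₑ ^ 2 ∂u := by ring

end Carleson

/-- The dyadic Carleson embedding theorem: if the nonnegative coefficients `a Q`
satisfy the Carleson packing condition `∑_{Q ⊆ S} a Q ≤ C u(S)` over all dyadic
cubes `S`, then `∑_Q a Q |E_Q^u f|² ≤ 4 C ‖f‖_{L²(u)}²`. -/
theorem carleson_embedding
    {X ι : Type*} [MeasurableSpace X]
    (u : Measure X)
    (cube : ι → Set X)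
    (hmeas : ∀ i, MeasurableSet (cube i))
    (hnested : ∀ i j, cube i ⊆ cube j ∨ cube j ⊆ cube i ∨ Disjoint (cube i) (cube j))
    (a : ι → ℝ≥0∞) (C : ℝ≥0∞)
    (hCar : ∀ S : ι, ∑' Q : {Q : ι // cube Q ⊆ cube S}, a (Q : ι) ≤ C * u (cube S))
    (f : X → ℝ) (hf : MemLp f 2 u) :
    ∑' Q : ι, a Q * ENNReal.ofReal (((u (cube Q)).toReal⁻¹ * ∫ x in cube Q, f x ∂u) ^ 2)
      ≤ 4 * C * (eLpNorm f 2 u) ^ 2 := by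
  have havg : ∀ Q, (u (cube Q)).toReal⁻¹ * ∫ x in cube Q, f x ∂u = ⨍ x in cube Q, f x ∂u :=
    fun Q => by rw [setAverage_eq, smul_eq_mul, Measure.real]
  simp only [havg, eLpNorm_two_sq, ENNReal.tsum_eq_iSup_sum]
  exact iSup_le (sum_mul_sq_setAverage_le hmeas hnested hCar hf.1)
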